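/- arXiv:1608.05879 — 5 statements merged into one kernel-verified Lean document; each statement's English description precedes it below -/
import Mathlib

section
/- For all natural numbers d ≥ 1 and r ≥ 1, d divides binomial(d·r, d-1). -/
/-- Integrality of the zeta polynomial `Z_d(r) = (dr).choose (d-1) / d`
of the noncrossing partition lattice: `d` divides `(d*r).choose (d-1)`. -/
theorem dvd_choose_zeta (d r : ℕ) (hd : 1 ≤ d) (hr : 1 ≤ r) :
    d ∣ (d * r).choose (d - 1) := by
  obtain ⟨k, rfl⟩ : ∃ k, d = k + 1 := ⟨d - 1, (Nat.succ_pred_eq_of_pos hd).symm⟩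
  simp only [Nat.add_sub_cancel]
  have key : ((k + 1) * r).choose (k + 1) * (k + 1)
      = ((k + 1) * r).choose k * ((k + 1) * r - k) :=
    Nat.choose_succ_right_eq _ _
  have hsub : (k + 1) * r - k = (k + 1) * (r - 1) + 1 := by
    have h1 : (k + 1) * r = (k + 1) * (r - 1) + (k + 1) := by
      conv_lhs => rw [show r = (r - 1) + 1 by omega]
      ring
    omega
  have hcop : Nat.Coprime (k + 1) ((k + 1) * r - k) := by
    rw [hsub]
    simp [Nat.coprime_mul_left_add_left]
  have hdvd : (k + 1) ∣ ((k + 1) * r).choose k * ((k + 1) * r - k) :=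
    key ▸ dvd_mul_left _ _
  exact hcop.dvd_of_dvd_mul_right hdvd
end

section
/- The band generators a_{ij} = σ_{i-1}σ_{i-2}⋯σ_{j+1}σ_j σ_{j+1}⁻¹⋯σ_{i-2}⁻¹σ_{i-1}⁻¹ of the braid group B_n satisfy the relation a_{ij}a_{jk} = a_{jk}a_{ik} = a_{ik}a_{ij} for all 1 ≤ k < j < i ≤ n. -/
def braidRels (m : ℕ) : Set (FreeGroup (Fin m)) :=
  {r | ∃ i j : Fin m,
      ((i : ℕ) + 2 ≤ (j : ℕ) ∧
        r = FreeGroup.of i * FreeGroup.of j * (FreeGroup.of i)⁻¹ * (FreeGroup.of j)⁻¹) ∨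
      ((i : ℕ) + 1 = (j : ℕ) ∧
        r = FreeGroup.of i * FreeGroup.of j * FreeGroup.of i *
            (FreeGroup.of j * FreeGroup.of i * FreeGroup.of j)⁻¹)}

/-- Artin's braid group `B_n`, with generators `σ₁, …, σ_{n-1}`. -/
abbrev BraidGroup (n : ℕ) := PresentedGroup (braidRels (n - 1))

/-- The Artin generator `σ i` of `B_n` (junk value `1` if `i` is out of range). -/
def bσ (n i : ℕ) : BraidGroup n :=
  if h : i - 1 < n - 1 then PresentedGroup.of ⟨i - 1, h⟩ else 1

/-- `δ = σ_{n-1} σ_{n-2} ⋯ σ₁`. -/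
def bδ (n : ℕ) : BraidGroup n := ((List.range (n-1)).map (fun k => bσ n (n-1-k))).prod

/-- `ε = δ σ₁`. -/
def bε (n : ℕ) : BraidGroup n := bδ n * bσ n 1

/-- `Δ = σ₁ (σ₂σ₁) ⋯ (σ_{n-1} ⋯ σ₁)`. -/
def bΔ (n : ℕ) : BraidGroup n :=
  ((List.range (n-1)).map (fun m => ((List.range (m+1)).map (fun k => bσ n (m+1-k))).prod)).prod

/-- The band generator `a_{ij} = σ_{i-1} ⋯ σ_{j+1} σ_j σ_{j+1}⁻¹ ⋯ σ_{i-1}⁻¹`. -/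
def band (n i j : ℕ) : BraidGroup n :=
  (((List.range (i-1-j)).map (fun k => bσ n (i-1-k))).prod) * bσ n j *
  (((List.range (i-1-j)).map (fun k => bσ n (i-1-k))).prod)⁻¹

/-- `[i, i-1, …, j] = a_{i,i-1} a_{i-1,i-2} ⋯ a_{j+1,j}`. -/
def bchain (n i j : ℕ) : BraidGroup n :=
  ((List.range (i-j)).map (fun t => band n (i-t) (i-t-1))).prod

/- #### Auxiliary lemmas -/

section KeyLemmas
variable {G : Type*} [Group G]

lemma braid_key1 (s t A : G) (h1 : t*s*t = s*t*s) (h2 : t*A*t = A*t*A) (h3 : s*A = A*s) :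
    s*(t*A*t⁻¹)*s = (t*A*t⁻¹)*s*(t*A*t⁻¹) := by
  have hT : t⁻¹ * s * t = s * t * s⁻¹ := by
    rw [eq_mul_inv_iff_mul_eq]
    calc t⁻¹ * s * t * s = t⁻¹ * (s * t * s) := by group
    _ = t⁻¹ * (t * s * t) := by rw [h1]
    _ = s * t := by group
  have h3' : s⁻¹ * A = A * s⁻¹ := ((show Commute s A from h3).inv_left).eq
  have hTf : ∀ x : G, t⁻¹ * (s * (t * x)) = s * (t * (s⁻¹ * x)) := fun x => by
    calc t⁻¹ * (s * (t * x)) = (t⁻¹ * s * t) * x := by group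
    _ = (s * t * s⁻¹) * x := by rw [hT]
    _ = s * (t * (s⁻¹ * x)) := by group
  have h3f : ∀ x : G, s * (A * x) = A * (s * x) := fun x => by
    calc s * (A * x) = (s * A) * x := by group
    _ = (A * s) * x := by rw [h3]
    _ = A * (s * x) := by group
  have h3g : ∀ x : G, s⁻¹ * (A * x) = A * (s⁻¹ * x) := fun x => by
    calc s⁻¹ * (A * x) = (s⁻¹ * A) * x := by group
    _ = (A * s⁻¹) * x := by rw [h3']
    _ = A * (s⁻¹ * x) := by group
  have h2f : ∀ x : G, A * (t * (A * x)) = t * (A * (t * x)) := fun x => by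
    calc A * (t * (A * x)) = (A * t * A) * x := by group
    _ = (t * A * t) * x := by rw [← h2]
    _ = t * (A * (t * x)) := by group
  have h1f : ∀ x : G, t * (s * (t * x)) = s * (t * (s * x)) := fun x => by
    calc t * (s * (t * x)) = (t * s * t) * x := by group
    _ = (s * t * s) * x := by rw [h1]
    _ = s * (t * (s * x)) := by group
  calc s*(t*A*t⁻¹)*s
      = s * (t * (A * (t⁻¹ * (s * (t * t⁻¹))))) := by group
    _ = s * (t * (A * (s * (t * (s⁻¹ * t⁻¹))))) := by rw [hTf t⁻¹]
    _ = s * (t * (s * (A * (t * (s⁻¹ * t⁻¹))))) := by rw [← h3f (t * (s⁻¹ * t⁻¹))]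
    _ = t * (s * (t * (A * (t * (s⁻¹ * t⁻¹))))) := by rw [← h1f (A * (t * (s⁻¹ * t⁻¹)))]
    _ = t * (s * (A * (t * (A * (s⁻¹ * t⁻¹))))) := by rw [← h2f (s⁻¹ * t⁻¹)]
    _ = t * (s * (A * (t * (s⁻¹ * (A * t⁻¹))))) := by rw [h3g t⁻¹]
    _ = t * (A * (s * (t * (s⁻¹ * (A * t⁻¹))))) := by rw [h3f (t * (s⁻¹ * (A * t⁻¹)))]
    _ = t * (A * (t⁻¹ * (s * (t * (A * t⁻¹))))) := by rw [← hTf (A * t⁻¹)]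
    _ = (t*A*t⁻¹)*s*(t*A*t⁻¹) := by group

lemma braid_key2 (s x y b : G) (hc : s*b = b*s) (hxy : x*b = b*y) :
    (s*x*s⁻¹)*b = b*(s*y*s⁻¹) := by
  have hc' : s⁻¹ * b = b * s⁻¹ := ((show Commute s b from hc).inv_left).eq
  calc s*x*s⁻¹*b = s*x*(s⁻¹*b) := by group
  _ = s*x*(b*s⁻¹) := by rw [hc']
  _ = s*(x*b)*s⁻¹ := by group
  _ = s*(b*y)*s⁻¹ := by rw [hxy]
  _ = (s*b)*(y*s⁻¹) := by group
  _ = (b*s)*(y*s⁻¹) := by rw [hc]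
  _ = b*(s*y*s⁻¹) := by group

lemma braid_key3 (s x y b : G) (hc : s*b = b*s) (hyx : b*y = y*x) :
    b*(s*y*s⁻¹) = (s*y*s⁻¹)*(s*x*s⁻¹) := by
  calc b*(s*y*s⁻¹) = (b*s)*(y*s⁻¹) := by group
  _ = (s*b)*(y*s⁻¹) := by rw [← hc]
  _ = s*(b*y)*s⁻¹ := by group
  _ = s*(y*x)*s⁻¹ := by rw [hyx]
  _ = (s*y*s⁻¹)*(s*x*s⁻¹) := by group

end KeyLemmas

lemma braid_rel_one {n : ℕ} {r : FreeGroup (Fin (n-1))} (h : r ∈ braidRels (n-1)) :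
    PresentedGroup.mk (braidRels (n-1)) r = 1 :=
  (QuotientGroup.eq_one_iff r).mpr (Subgroup.subset_normalClosure h)

lemma bσ_comm (n a b : ℕ) (hb : 1 ≤ b) (hab : b + 2 ≤ a) :
    bσ n a * bσ n b = bσ n b * bσ n a := by
  unfold bσ
  split_ifs with h1 h2 h2
  · set i : Fin (n-1) := ⟨b-1, h2⟩
    set j : Fin (n-1) := ⟨a-1, h1⟩
    have hmem : FreeGroup.of i * FreeGroup.of j * (FreeGroup.of i)⁻¹ * (FreeGroup.of j)⁻¹
        ∈ braidRels (n-1) := ⟨i, j, Or.inl ⟨by simp [i, j]; omega, rfl⟩⟩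
    have h1' := braid_rel_one hmem
    simp only [map_mul, map_inv] at h1'
    have hc : Commute (PresentedGroup.of (rels := braidRels (n-1)) i) (PresentedGroup.of j) := by
      rw [← commutatorElement_eq_one_iff_commute]
      exact h1'
    exact hc.symm
  · simp
  · simp
  · simp

lemma bσ_braid (n b : ℕ) (hb : 1 ≤ b) (hbn : b + 1 ≤ n - 1) :
    bσ n b * bσ n (b+1) * bσ n b = bσ n (b+1) * bσ n b * bσ n (b+1) := by
  have hb1 : b - 1 < n - 1 := by omega
  have hb2 : b + 1 - 1 < n - 1 := by omega
  unfold bσ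
  rw [dif_pos hb1, dif_pos hb2]
  set i : Fin (n-1) := ⟨b-1, hb1⟩
  set j : Fin (n-1) := ⟨b+1-1, hb2⟩
  have hmem : FreeGroup.of i * FreeGroup.of j * FreeGroup.of i *
      (FreeGroup.of j * FreeGroup.of i * FreeGroup.of j)⁻¹ ∈ braidRels (n-1) :=
    ⟨i, j, Or.inr ⟨by simp [i, j]; omega, rfl⟩⟩
  have h1' := braid_rel_one hmem
  simp only [map_mul, map_inv] at h1'
  rw [mul_inv_eq_one] at h1'
  exact h1'

lemma band_base (n j : ℕ) : band n (j+1) j = bσ n j := by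
  simp [band]

lemma band_succ (n i j : ℕ) (h : j < i) :
    band n (i+1) j = bσ n i * band n i j * (bσ n i)⁻¹ := by
  unfold band
  simp only [Nat.add_sub_cancel]
  rw [show i - j = (i-1-j)+1 from by omega, List.range_succ_eq_map]
  have hf : (fun k => bσ n (i - (k+1))) = (fun k => bσ n (i-1-k)) := by
    funext k; congr 1; omega
  simp only [List.map_cons, List.map_map, Nat.sub_zero, List.prod_cons]
  have : (List.map ((fun k => bσ n (i - k)) ∘ Nat.succ) (List.range (i - 1 - j))) =
      (List.map (fun k => bσ n (i-1-k)) (List.range (i - 1 - j))) := by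
    rw [← hf]; rfl
  rw [this]
  group

lemma bσ_comm_band (n m i j : ℕ) (hj : 1 ≤ j) (hji : j < i) (him : i < m) :
    Commute (bσ n m) (band n i j) := by
  have hP : Commute (bσ n m)
      (((List.range (i-1-j)).map (fun k => bσ n (i-1-k))).prod) := by
    apply Commute.list_prod_right
    intro x hx
    simp only [List.mem_map, List.mem_range] at hx
    obtain ⟨kk, hkk, rfl⟩ := hx
    exact bσ_comm n m (i-1-kk) (by omega) (by omega)
  have hσ : Commute (bσ n m) (bσ n j) := bσ_comm n m j hj (by omega)
  unfold band
  exact (hP.mul_right hσ).mul_right hP.inv_right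

lemma braid_band (n : ℕ) : ∀ d k, 1 ≤ k → k + d + 1 ≤ n - 1 →
    bσ n (k+d+1) * band n (k+d+1) k * bσ n (k+d+1) =
      band n (k+d+1) k * bσ n (k+d+1) * band n (k+d+1) k := by
  intro d
  induction d with
  | zero =>
    intro k hk hn
    simp only [Nat.add_zero]
    rw [band_base]
    exact (bσ_braid n k hk (by omega)).symm
  | succ d ih =>
    intro k hk hn
    have hj : k + (d+1) + 1 = (k+d+1)+1 := by omega
    rw [hj, band_succ n (k+d+1) k (by omega)]
    exact braid_key1 (bσ n ((k+d+1)+1)) (bσ n (k+d+1)) (band n (k+d+1) k)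
      (bσ_braid n (k+d+1) (by omega) (by omega))
      (ih k hk (by omega))
      ((bσ_comm_band n ((k+d+1)+1) (k+d+1) k hk (by omega) (by omega)).eq)

lemma band_rel_aux (n j k : ℕ) (hk : 1 ≤ k) (hkj : k < j) :
    ∀ i, j < i → i ≤ n →
      (band n i j * band n j k = band n j k * band n i k ∧
        band n j k * band n i k = band n i k * band n i j) := by
  intro i hji
  induction i, hji using Nat.le_induction with
  | base =>
    intro hin
    have hd : k + (j - k - 1) + 1 = j := by omega
    have hbr := braid_band n (j-k-1) k hk (by omega)
    rw [hd] at hbr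
    set a := band n j k with ha
    set s := bσ n j with hs
    rw [band_base, band_succ n j k hkj, ← ha, ← hs]
    constructor
    · calc s * a = (s*a*s)*s⁻¹ := by group
      _ = (a*s*a)*s⁻¹ := by rw [hbr]
      _ = a * (s*a*s⁻¹) := by group
    · calc a * (s*a*s⁻¹) = (a*s*a)*s⁻¹ := by group
      _ = (s*a*s)*s⁻¹ := by rw [← hbr]
      _ = (s*a*s⁻¹)*s := by group
  | succ i hji ih =>
    intro hin
    obtain ⟨ih1, ih2⟩ := ih (by omega)
    have hc := (bσ_comm_band n i j k hk hkj (by omega)).eq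
    rw [band_succ n i j (by omega), band_succ n i k (by omega)]
    exact ⟨braid_key2 (bσ n i) (band n i j) (band n i k) (band n j k) hc ih1,
      braid_key3 (bσ n i) (band n i j) (band n i k) (band n j k) hc ih2⟩

/-- The band generators satisfy `a_{ij} a_{jk} = a_{jk} a_{ik} = a_{ik} a_{ij}`
for `1 ≤ k < j < i ≤ n`. -/
theorem band_relations (n i j k : ℕ) (hk : 1 ≤ k) (hkj : k < j) (hji : j < i)
    (hin : i ≤ n) :
    band n i j * band n j k = band n j k * band n i k ∧
      band n j k * band n i k = band n i k * band n i j := by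
  exact band_rel_aux n j k hk hkj i hji hin
end

section
/- Let n = rd + 1 with r ≥ 2 and d ≥ 1, ε = δσ₁ ∈ B_n where δ = σ_{n-1}⋯σ₁, and suppose b₀,…,b_{r-1} ∈ B_n satisfy: each b_k lies in the subgroup generated by σ_j for kd+2 ≤ j ≤ kd+d (so b_k is supported on the strands kd+2,…,kd+d+1), and b₀ τ^{-d}(b₁) τ^{-2d}(b₂) ⋯ τ^{-(r-1)d}(b_{r-1}) = [d+1, d, …, 2], where τ(x) = δ⁻¹xδ and [d+1,…,2] = a_{d+1,d}a_{d,d-1}⋯a_{3,2}. Set α = δ^d a_{d+1,1} b₀ b₁ ⋯ b_{r-1} and c = τ^{-d}(b₁⋯b_{r-1}) τ^{-2d}(b₂⋯b_{r-1}) ⋯ τ^{-(r-1)d}(b_{r-1}). Then c⁻¹ α c = ε^d. -/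
namespace BraidAux

lemma braid_mk_eq_one {n : ℕ} {r : FreeGroup (Fin (n-1))} (h : r ∈ braidRels (n-1)) :
    PresentedGroup.mk (braidRels (n-1)) r = 1 :=
  (QuotientGroup.eq_one_iff r).mpr (Subgroup.subset_normalClosure h)

lemma bσ_comm {n : ℕ} {i j : ℕ} (h1 : 1 ≤ i) (h : i + 2 ≤ j) :
    Commute (bσ n i) (bσ n j) := by
  unfold bσ
  by_cases hj : j - 1 < n - 1
  · have hi : i - 1 < n - 1 := by omega
    rw [dif_pos hj, dif_pos hi]
    have hrel : (FreeGroup.of (⟨i-1, hi⟩ : Fin (n-1)) * FreeGroup.of (⟨j-1, hj⟩ : Fin (n-1)) *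
        (FreeGroup.of (⟨i-1, hi⟩ : Fin (n-1)))⁻¹ * (FreeGroup.of (⟨j-1, hj⟩ : Fin (n-1)))⁻¹)
        ∈ braidRels (n-1) :=
      ⟨⟨i-1, hi⟩, ⟨j-1, hj⟩, Or.inl ⟨by simp; omega, rfl⟩⟩
    have h2 := braid_mk_eq_one (n := n) hrel
    simp only [map_mul, map_inv] at h2
    have ha : PresentedGroup.mk (braidRels (n-1)) (FreeGroup.of (⟨i-1, hi⟩ : Fin (n-1)))
        = PresentedGroup.of ⟨i-1, hi⟩ := rfl
    have hb : PresentedGroup.mk (braidRels (n-1)) (FreeGroup.of (⟨j-1, hj⟩ : Fin (n-1)))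
        = PresentedGroup.of ⟨j-1, hj⟩ := rfl
    rw [ha, hb] at h2
    have h3 := mul_inv_eq_one.mp h2
    have h4 := mul_inv_eq_iff_eq_mul.mp h3
    exact h4
  · rw [dif_neg hj]
    exact Commute.one_right _

lemma bσ_braid {n : ℕ} {i : ℕ} (h1 : 1 ≤ i) (h2 : i + 1 ≤ n - 1) :
    bσ n i * bσ n (i+1) * bσ n i = bσ n (i+1) * bσ n i * bσ n (i+1) := by
  unfold bσ
  have hi : i - 1 < n - 1 := by omega
  have hj : i + 1 - 1 < n - 1 := by omega
  rw [dif_pos hi, dif_pos hj]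
  have hrel : (FreeGroup.of (⟨i-1, hi⟩ : Fin (n-1)) * FreeGroup.of (⟨i+1-1, hj⟩ : Fin (n-1)) *
      FreeGroup.of (⟨i-1, hi⟩ : Fin (n-1)) *
      (FreeGroup.of (⟨i+1-1, hj⟩ : Fin (n-1)) * FreeGroup.of (⟨i-1, hi⟩ : Fin (n-1)) *
        FreeGroup.of (⟨i+1-1, hj⟩ : Fin (n-1)))⁻¹) ∈ braidRels (n-1) :=
    ⟨⟨i-1, hi⟩, ⟨i+1-1, hj⟩, Or.inr ⟨by simp; omega, rfl⟩⟩
  have h2' := braid_mk_eq_one (n := n) hrel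
  simp only [map_mul, map_inv] at h2'
  exact mul_inv_eq_one.mp h2'

/-- decreasing product `σ_a σ_{a-1} ⋯ σ_b` -/
def Dd (n a b : ℕ) : BraidGroup n :=
  ((List.range (a+1-b)).map (fun k => bσ n (a-k))).prod

lemma Dd_eq_one {n a b : ℕ} (h : a + 1 ≤ b) : Dd n a b = 1 := by
  unfold Dd
  rw [show a + 1 - b = 0 by omega]
  simp

lemma Dd_cons {n a b : ℕ} (hb : 1 ≤ b) (h : b ≤ a) :
    Dd n a b = bσ n a * Dd n (a-1) b := by
  unfold Dd
  rw [show a + 1 - b = (a - b) + 1 by omega, List.range_succ_eq_map]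
  simp only [List.map_cons, List.map_map, List.prod_cons, Nat.sub_zero]
  rw [show a - 1 + 1 - b = a - b by omega]
  congr 1
  refine congrArg (fun l : List (BraidGroup n) => l.prod) (List.map_congr_left ?_)
  intro k _
  simp only [Function.comp_apply]
  congr 1
  omega

lemma Dd_last {n a b : ℕ} (h : b ≤ a) :
    Dd n a b = Dd n a (b+1) * bσ n b := by
  unfold Dd
  rw [show a + 1 - b = (a - b) + 1 by omega, List.range_succ]
  rw [List.map_append, List.prod_append]
  simp only [List.map_cons, List.map_nil, List.prod_cons, List.prod_nil, mul_one]
  rw [show a - (a - b) = b by omega, show a + 1 - (b+1) = a - b by omega]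

lemma bδ_eq_Dd (n : ℕ) : bδ n = Dd n (n-1) 1 := by
  unfold bδ Dd
  rw [show n - 1 + 1 - 1 = n - 1 by omega]

lemma commute_Dd {n a b : ℕ} {x : BraidGroup n}
    (H : ∀ j, b ≤ j → j ≤ a → Commute x (bσ n j)) : Commute x (Dd n a b) := by
  apply Commute.list_prod_right
  intro z hz
  simp only [List.mem_map, List.mem_range] at hz
  obtain ⟨k, hk, rfl⟩ := hz
  exact H (a - k) (by omega) (by omega)

lemma sigma_Dd_swap {n : ℕ} : ∀ a, ∀ {b i : ℕ}, 1 ≤ b → b ≤ i → i + 1 ≤ a → a ≤ n - 1 →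
    Dd n a b * bσ n (i+1) = bσ n i * Dd n a b := by
  intro a
  induction a with
  | zero => intro b i hb hbi hia; omega
  | succ a ih =>
    intro b i hb hbi hia han
    rcases Nat.lt_or_ge (i+1) (a+1) with hlt | hge
    · -- a + 1 ≥ i + 2, peel head
      rw [Dd_cons hb (by omega)]
      simp only [Nat.add_sub_cancel]
      rw [mul_assoc, ih hb hbi (by omega) (by omega), ← mul_assoc, ← mul_assoc]
      congr 1
      rw [(bσ_comm (by omega) (by omega : i + 2 ≤ a + 1)).eq]
    · -- a + 1 = i + 1
      have hai : a = i := by omega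
      subst hai
      rw [Dd_cons hb (by omega)]
      simp only [Nat.add_sub_cancel]
      rw [Dd_cons hb (by omega)]  -- Dd n a b = σ_a * Dd n (a-1) b
      have hcomm : Commute (bσ n (a+1)) (Dd n (a-1) b) := by
        apply commute_Dd
        intro j hbj hja
        exact (bσ_comm (by omega) (by omega)).symm
      calc bσ n (a+1) * (bσ n a * Dd n (a-1) b) * bσ n (a+1)
          = bσ n (a+1) * bσ n a * (Dd n (a-1) b * bσ n (a+1)) := by group
        _ = bσ n (a+1) * bσ n a * (bσ n (a+1) * Dd n (a-1) b) := by rw [← hcomm.eq]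
        _ = (bσ n (a+1) * bσ n a * bσ n (a+1)) * Dd n (a-1) b := by group
        _ = (bσ n a * bσ n (a+1) * bσ n a) * Dd n (a-1) b := by
              rw [← bσ_braid (by omega) (by omega)]
        _ = bσ n a * (bσ n (a+1) * (bσ n a * Dd n (a-1) b)) := by group
section Part3
variable {n : ℕ}

lemma delta_swap {j : ℕ} (h2 : 2 ≤ j) (h3 : j ≤ n - 1) :
    bδ n * bσ n j = bσ n (j-1) * bδ n := by
  rw [bδ_eq_Dd]
  have := sigma_Dd_swap (n := n) (n-1) (b := 1) (i := j - 1)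
    (by omega) (by omega) (by omega) (by omega)
  rw [show j - 1 + 1 = j by omega] at this
  exact this

lemma pow_delta_swap : ∀ (p : ℕ) {j : ℕ}, p + 1 ≤ j → j ≤ n - 1 →
    (bδ n)^p * bσ n j = bσ n (j - p) * (bδ n)^p := by
  intro p
  induction p with
  | zero => intro j _ _; simp
  | succ p ih =>
    intro j h1 h2
    rw [pow_succ', mul_assoc, ih (by omega) h2, ← mul_assoc,
      delta_swap (by omega) (by omega), show j - p - 1 = j - (p+1) by omega, mul_assoc]

lemma Dd_delta_shift : ∀ (m a b : ℕ), a + 1 - b = m → 1 ≤ b → a ≤ n - 2 →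
    Dd n a b * bδ n = bδ n * Dd n (a+1) (b+1) := by
  intro m
  induction m with
  | zero =>
    intro a b hm hb ha
    rw [Dd_eq_one (by omega), Dd_eq_one (by omega), one_mul, mul_one]
  | succ m ih =>
    intro a b hm hb ha
    have hba : b ≤ a := by omega
    rw [Dd_last hba, mul_assoc]
    have hswap : bσ n b * bδ n = bδ n * bσ n (b+1) := by
      have := delta_swap (n := n) (j := b + 1) (by omega) (by omega)
      rw [show b + 1 - 1 = b by omega] at this
      exact this.symm
    rw [hswap, ← mul_assoc, ih a (b+1) (by omega) (by omega) ha, mul_assoc,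
      ← Dd_last (by omega)]

lemma eps_pow : ∀ (d : ℕ), d ≤ n - 1 → bε n ^ d = (bδ n)^d * Dd n d 1 := by
  intro d
  induction d with
  | zero => intro _; simp [Dd_eq_one]
  | succ d ih =>
    intro hd
    rw [pow_succ, ih (by omega)]
    unfold bε
    rw [show (bδ n)^d * Dd n d 1 * (bδ n * bσ n 1)
        = (bδ n)^d * (Dd n d 1 * bδ n) * bσ n 1 by group,
      Dd_delta_shift (d + 1 - 1) d 1 rfl (by omega) (by omega)]
    rw [show bδ n ^ d * (bδ n * Dd n (d+1) (1+1)) * bσ n 1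
        = bδ n ^ (d+1) * (Dd n (d+1) (1+1) * bσ n 1) by group, ← Dd_last (by omega)]

/-- support subgroup: generated by σ_j, lo ≤ j ≤ hi -/
def Supp (n lo hi : ℕ) : Subgroup (BraidGroup n) :=
  Subgroup.closure {x : BraidGroup n | ∃ j : ℕ, lo ≤ j ∧ j ≤ hi ∧ x = bσ n j}

lemma supp_mono {lo hi lo' hi' : ℕ} (h1 : lo' ≤ lo) (h2 : hi ≤ hi') :
    Supp n lo hi ≤ Supp n lo' hi' := by
  apply Subgroup.closure_mono
  rintro x ⟨j, hj1, hj2, rfl⟩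
  exact ⟨j, by omega, by omega, rfl⟩

lemma bσ_mem_supp {lo hi j : ℕ} (h1 : lo ≤ j) (h2 : j ≤ hi) :
    bσ n j ∈ Supp n lo hi :=
  Subgroup.subset_closure ⟨j, h1, h2, rfl⟩

lemma Dd_mem_supp {lo hi a b : ℕ} (h1 : lo ≤ b) (h2 : a ≤ hi) :
    Dd n a b ∈ Supp n lo hi := by
  apply Subgroup.list_prod_mem
  intro x hx
  simp only [List.mem_map, List.mem_range] at hx
  obtain ⟨k, hk, rfl⟩ := hx
  exact bσ_mem_supp (by omega) (by omega)

lemma supp_comm {lo hi lo' hi' : ℕ} {x y : BraidGroup n} (h0 : 1 ≤ lo)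
    (hgap : hi + 2 ≤ lo') (hx : x ∈ Supp n lo hi) (hy : y ∈ Supp n lo' hi') :
    Commute x y := by
  have key : ∀ j, lo ≤ j → j ≤ hi → Commute (bσ n j) y := by
    intro j hj1 hj2
    have : Supp n lo' hi' ≤ Subgroup.centralizer {bσ n j} := by
      rw [Supp, Subgroup.closure_le]
      rintro z ⟨j', hj1', hj2', rfl⟩
      rw [SetLike.mem_coe, Subgroup.mem_centralizer_iff]
      rintro g hg
      rw [Set.mem_singleton_iff] at hg
      subst hg
      exact (bσ_comm (by omega) (by omega)).eq
    have := this hy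
    rw [Subgroup.mem_centralizer_iff] at this
    exact this (bσ n j) rfl
  have : Supp n lo hi ≤ Subgroup.centralizer {y} := by
    rw [Supp, Subgroup.closure_le]
    rintro z ⟨j, hj1, hj2, rfl⟩
    rw [SetLike.mem_coe, Subgroup.mem_centralizer_iff]
    rintro g hg
    rw [Set.mem_singleton_iff] at hg
    subst hg
    exact (key j hj1 hj2).symm.eq
  have := this hx
  rw [Subgroup.mem_centralizer_iff] at this
  exact ((this y rfl).symm : x * y = y * x)

lemma conj_supp {lo hi p : ℕ} {x : BraidGroup n} (hx : x ∈ Supp n lo hi)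
    (hp : p + 1 ≤ lo) (hhi : hi ≤ n - 1) :
    (bδ n)^p * x * ((bδ n)^p)⁻¹ ∈ Supp n (lo - p) (hi - p) := by
  have hmap : ((Supp n lo hi).map (MulAut.conj ((bδ n)^p)).toMonoidHom)
      ≤ Supp n (lo - p) (hi - p) := by
    rw [Supp, MonoidHom.map_closure, Subgroup.closure_le]
    rintro z ⟨w, ⟨j, hj1, hj2, rfl⟩, rfl⟩
    simp only [MulEquiv.coe_toMonoidHom, MulAut.conj_apply]
    have hc : (bδ n)^p * bσ n j * ((bδ n)^p)⁻¹ = bσ n (j - p) := by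
      rw [pow_delta_swap p (by omega) (by omega)]
      group
    rw [hc]
    exact SetLike.mem_coe.mpr (bσ_mem_supp (by omega) (by omega))
  apply hmap
  exact Subgroup.mem_map_of_mem _ hx

end Part3
section Generic
variable {M : Type*} [Monoid M] {G : Type*} [Group G]

lemma prod_range_cons (f : ℕ → M) (m : ℕ) :
    ((List.range (m+1)).map f).prod = f 0 * ((List.range m).map (fun t => f (t+1))).prod := by
  rw [List.range_succ_eq_map]
  simp [List.map_map, Function.comp_def]

lemma prod_range_snoc (f : ℕ → M) (m : ℕ) :
    ((List.range (m+1)).map f).prod = ((List.range m).map f).prod * f m := by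
  rw [List.range_succ]; simp

lemma conj_list_prod (u : G) (l : List G) :
    (l.map (fun g => u * g * u⁻¹)).prod = u * l.prod * u⁻¹ := by
  induction l with
  | nil => simp
  | cons a t ih => simp only [List.map_cons, List.prod_cons, ih]; group

lemma prod_interchange (f g : ℕ → G) :
    ∀ m : ℕ, (∀ i, i < m → ∀ j, j < m → Commute (g i) (f j)) →
    ((List.range m).map (fun t => f t * g t)).prod
      = ((List.range m).map f).prod * ((List.range m).map g).prod := by
  intro m
  induction m with
  | zero => simp
  | succ m ih =>
    intro hc
    rw [prod_range_snoc, prod_range_snoc f, prod_range_snoc g,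
      ih (fun i hi j hj => hc i (by omega) j (by omega))]
    have hcomm : Commute (((List.range m).map g).prod) (f m) := by
      apply (Commute.list_prod_right _ _ ?_).symm
      intro z hz
      simp only [List.mem_map, List.mem_range] at hz
      obtain ⟨i, hi, rfl⟩ := hz
      exact (hc i (by omega) m (by omega)).symm
    calc ((List.range m).map f).prod * ((List.range m).map g).prod * (f m * g m)
        = ((List.range m).map f).prod * (((List.range m).map g).prod * f m) * g m := by group
      _ = ((List.range m).map f).prod * (f m * ((List.range m).map g).prod) * g m := by
          rw [hcomm.eq]
      _ = ((List.range m).map f).prod * f m * (((List.range m).map g).prod * g m) := by group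

end Generic

def Pb (n r : ℕ) (b : ℕ → BraidGroup n) (m : ℕ) : BraidGroup n :=
  ((List.range (r - m)).map (fun s => b (m + s))).prod

def zz (n r d : ℕ) (b : ℕ → BraidGroup n) (t : ℕ) : BraidGroup n :=
  bδ n ^ (t * d) * Pb n r b t * (bδ n ^ (t * d))⁻¹

def xx (n d : ℕ) (b : ℕ → BraidGroup n) (t : ℕ) : BraidGroup n :=
  bδ n ^ (t * d) * b t * (bδ n ^ (t * d))⁻¹

def yy (n r d : ℕ) (b : ℕ → BraidGroup n) (t : ℕ) : BraidGroup n :=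
  bδ n ^ (t * d) * Pb n r b (t+1) * (bδ n ^ (t * d))⁻¹

lemma Pb_peel {n r : ℕ} (b : ℕ → BraidGroup n) {t : ℕ} (ht : t < r) :
    Pb n r b t = b t * Pb n r b (t+1) := by
  unfold Pb
  rw [show r - t = (r - (t+1)) + 1 by omega, List.range_succ_eq_map]
  simp only [List.map_cons, List.prod_cons, List.map_map, Nat.add_zero, Function.comp_def]
  congr 1
  refine congrArg (fun l : List (BraidGroup n) => l.prod) (List.map_congr_left ?_)
  intro s _
  congr 1
  omega

lemma zz_eq {n r d : ℕ} (b : ℕ → BraidGroup n) {t : ℕ} (ht : t < r) :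
    zz n r d b t = xx n d b t * yy n r d b t := by
  unfold zz xx yy
  rw [Pb_peel b ht]
  group

lemma bchain_eq_Dd {n d : ℕ} : bchain n (d+1) 2 = Dd n d 2 := by
  unfold bchain Dd
  have e1 : ∀ t : ℕ, band n (d+1-t) (d+1-t-1) = bσ n (d+1-t-1) := by
    intro t
    unfold band
    rw [show d+1-t-1-(d+1-t-1) = 0 by omega]
    simp
  simp only [e1]
  have e2 : ∀ t : ℕ, d+1-t-1 = d-t := fun t => by omega
  simp only [e2]

lemma band_eq {n d : ℕ} : band n (d+1) 1 = Dd n d 2 * bσ n 1 * (Dd n d 2)⁻¹ := by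
  unfold band Dd
  rw [show d+1-1-1 = d+1-2 by omega]
  have e1 : ∀ k : ℕ, d+1-1-k = d-k := fun k => by omega
  simp only [e1]

end BraidAux


open BraidAux in
/-- Let `n = rd+1` with `r ≥ 2`, `d ≥ 1`. Suppose each `bₖ` (for `0 ≤ k ≤ r-1`)
is supported on the strands `kd+2, …, kd+d+1`, i.e. lies in the subgroup generated by
the `σⱼ` with `kd+2 ≤ j ≤ kd+d`, and
`b₀ τ^{-d}(b₁) τ^{-2d}(b₂) ⋯ τ^{-(r-1)d}(b_{r-1}) = [d+1, d, …, 2]`,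
where `τ(x) = δ⁻¹ x δ`.  Set `α = δ^d a_{d+1,1} b₀ b₁ ⋯ b_{r-1}` and
`c = τ^{-d}(b₁⋯b_{r-1}) τ^{-2d}(b₂⋯b_{r-1}) ⋯ τ^{-(r-1)d}(b_{r-1})`.
Then `c⁻¹ α c = ε^d`. -/
theorem conjugate_to_epsilon_pow (n r d : ℕ) (hr : 2 ≤ r) (hd : 1 ≤ d)
    (hn : n = r * d + 1) (b : ℕ → BraidGroup n)
    (hsupp : ∀ k < r, b k ∈ Subgroup.closure
      {x : BraidGroup n | ∃ j : ℕ, k * d + 2 ≤ j ∧ j ≤ k * d + d ∧ x = bσ n j})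
    (hprod : ((List.range r).map
        (fun k => (bδ n) ^ (k * d) * b k * ((bδ n) ^ (k * d))⁻¹)).prod
      = bchain n (d + 1) 2) :
    (((List.range (r - 1)).map (fun t =>
        (bδ n) ^ ((t + 1) * d) *
          ((List.range (r - (t + 1))).map (fun s => b (t + 1 + s))).prod *
          ((bδ n) ^ ((t + 1) * d))⁻¹)).prod)⁻¹ *
      (bδ n ^ d * band n (d + 1) 1 * ((List.range r).map b).prod) *
      ((List.range (r - 1)).map (fun t =>
        (bδ n) ^ ((t + 1) * d) *
          ((List.range (r - (t + 1))).map (fun s => b (t + 1 + s))).prod *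
          ((bδ n) ^ ((t + 1) * d))⁻¹)).prod
    = bε n ^ d := by
  have hmul : ∀ t, t + 1 ≤ r → t * d + d ≤ n - 1 := by
    intro t ht
    have h1 : (t+1) * d ≤ r * d := Nat.mul_le_mul_right d ht
    have h2 : (t+1) * d = t * d + d := by ring
    omega
  have hd_le : d ≤ n - 1 := by
    have := hmul 0 (by omega)
    omega
  set cS := ((List.range (r - 1)).map (fun t =>
        (bδ n) ^ ((t + 1) * d) *
          ((List.range (r - (t + 1))).map (fun s => b (t + 1 + s))).prod *
          ((bδ n) ^ ((t + 1) * d))⁻¹)).prod with hcSdef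
  -- supports
  have hxmem : ∀ t, t < r → xx n d b t ∈ Supp n 2 d := by
    intro t ht
    have hb : b t ∈ Supp n (t*d+2) (t*d+d) := hsupp t ht
    have h1 := conj_supp (p := t*d) hb (by omega) (hmul t (by omega))
    rw [show t*d+2-t*d = 2 by omega, show t*d+d-t*d = d by omega] at h1
    exact h1
  have hPmem : ∀ m, 1 ≤ m → Pb n r b m ∈ Supp n (m*d+2) (n-1) := by
    intro m hm
    apply Subgroup.list_prod_mem
    intro x hx
    simp only [Pb, List.mem_map, List.mem_range] at hx
    obtain ⟨s, hs, rfl⟩ := hx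
    refine supp_mono ?_ ?_ (hsupp (m+s) (by omega))
    · have : m * d ≤ (m+s) * d := Nat.mul_le_mul_right d (by omega)
      omega
    · have h2 : (m+s) * d + d ≤ n - 1 := hmul (m+s) (by omega)
      omega
  have hymem : ∀ t, t < r → yy n r d b t ∈ Supp n (d+2) (n-1) := by
    intro t ht
    have hP := hPmem (t+1) (by omega)
    have h1 := conj_supp (p := t*d) hP (by
      have : (t+1) * d = t * d + d := by ring
      omega) (by omega)
    rw [show (t+1)*d+2-t*d = d+2 by
      have h9 : (t+1)*d = t*d+d := by ring
      omega] at h1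
    exact supp_mono (le_refl _) (by omega) h1
  have hcomm_xy : ∀ i, i < r → ∀ j, j < r → Commute (yy n r d b i) (xx n d b j) :=
    fun i hi j hj => (supp_comm (by omega) (by omega) (hxmem j hj) (hymem i hi)).symm
  -- pieces
  have hX : ((List.range r).map (xx n d b)).prod = bchain n (d+1) 2 := hprod
  have hcore : ((List.range r).map (zz n r d b)).prod
      = Dd n d 2 * ((List.range (r-1)).map (yy n r d b)).prod := by
    calc ((List.range r).map (zz n r d b)).prod
        = ((List.range r).map (fun t => xx n d b t * yy n r d b t)).prod := by
          refine congrArg (fun l : List (BraidGroup n) => l.prod) (List.map_congr_left ?_)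
          intro t ht
          rw [List.mem_range] at ht
          exact zz_eq b ht
      _ = ((List.range r).map (xx n d b)).prod * ((List.range r).map (yy n r d b)).prod :=
          prod_interchange _ _ r hcomm_xy
      _ = Dd n d 2 * ((List.range r).map (yy n r d b)).prod := by
          rw [hX, bchain_eq_Dd]
      _ = Dd n d 2 * (((List.range (r-1)).map (yy n r d b)).prod * yy n r d b (r-1)) := by
          have h2 := prod_range_snoc (yy n r d b) (r-1)
          rw [show r-1+1 = r by omega] at h2
          rw [h2]
      _ = Dd n d 2 * ((List.range (r-1)).map (yy n r d b)).prod := by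
          have hy1 : yy n r d b (r-1) = 1 := by
            unfold yy Pb
            rw [show r - (r-1+1) = 0 by omega]
            simp
          rw [hy1, mul_one]
  have hcS1 : cS = ((List.range (r-1)).map (fun t => zz n r d b (t+1))).prod := by
    rw [hcSdef]; rfl
  have hPc : Pb n r b 0 * cS = Dd n d 2 * ((List.range (r-1)).map (yy n r d b)).prod := by
    rw [hcS1]
    have hz0 : Pb n r b 0 = zz n r d b 0 := by
      unfold zz
      simp
    rw [hz0]
    have hsplit := prod_range_cons (zz n r d b) (r-1)
    rw [show r-1+1 = r by omega] at hsplit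
    rw [← hsplit]
    exact hcore
  have hcq : cS = bδ n ^ d * ((List.range (r-1)).map (yy n r d b)).prod * (bδ n ^ d)⁻¹ := by
    rw [hcS1]
    have e1 : (fun t => zz n r d b (t+1))
        = (fun g => bδ n ^ d * g * (bδ n ^ d)⁻¹) ∘ (yy n r d b) := by
      funext t
      simp only [Function.comp_apply]
      unfold zz yy
      rw [show (t+1) * d = d + t * d by ring, pow_add]
      group
    rw [e1, ← List.map_map, conj_list_prod]
  have heps : bε n ^ d = bδ n ^ d * (Dd n d 2 * bσ n 1) := by
    rw [eps_pow d hd_le, Dd_last (show 1 ≤ d from hd)]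
  have hcomm2 : Commute (((List.range (r-1)).map (yy n r d b)).prod) (Dd n d 2 * bσ n 1) := by
    refine (supp_comm (lo := 1) (hi := d) (lo' := d+2) (hi' := n-1) (by omega) (by omega)
      ?_ ?_).symm
    · exact Subgroup.mul_mem _ (Dd_mem_supp (by omega) (le_refl d)) (bσ_mem_supp (by omega) hd)
    · apply Subgroup.list_prod_mem
      intro x hx
      simp only [List.mem_map, List.mem_range] at hx
      obtain ⟨t, ht, rfl⟩ := hx
      exact hymem t (by omega)
  -- final
  rw [band_eq, show ((List.range r).map b).prod = Pb n r b 0 by unfold Pb; simp]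
  have key : bδ n ^ d * (Dd n d 2 * bσ n 1 * (Dd n d 2)⁻¹) * Pb n r b 0 * cS
      = cS * bε n ^ d := by
    calc bδ n ^ d * (Dd n d 2 * bσ n 1 * (Dd n d 2)⁻¹) * Pb n r b 0 * cS
        = bδ n ^ d * (Dd n d 2 * bσ n 1 * (Dd n d 2)⁻¹) * (Pb n r b 0 * cS) := by
          rw [mul_assoc]
      _ = bδ n ^ d * (Dd n d 2 * bσ n 1 * (Dd n d 2)⁻¹) *
            (Dd n d 2 * ((List.range (r-1)).map (yy n r d b)).prod) := by rw [hPc]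
      _ = bδ n ^ d * ((Dd n d 2 * bσ n 1) * ((List.range (r-1)).map (yy n r d b)).prod) := by
          group
      _ = bδ n ^ d * (((List.range (r-1)).map (yy n r d b)).prod * (Dd n d 2 * bσ n 1)) := by
          rw [← hcomm2.eq]
      _ = (bδ n ^ d * ((List.range (r-1)).map (yy n r d b)).prod * (bδ n ^ d)⁻¹) *
            (bδ n ^ d * (Dd n d 2 * bσ n 1)) := by group
      _ = cS * bε n ^ d := by rw [← hcq, ← heps]
  rw [mul_assoc, key, ← mul_assoc, inv_mul_cancel, one_mul]
end

section
/- In the braid group B_n, ε^d = δ^d · [d+1, d, …, 2, 1] for every 1 ≤ d ≤ n-1, where [d+1,…,2,1] = a_{d+1,d} a_{d,d-1} ⋯ a_{2,1} is a product of band generators. -/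
namespace EpsPowAux

lemma mk_rel_one {m : ℕ} {r : FreeGroup (Fin m)} (h : r ∈ braidRels m) :
    PresentedGroup.mk (braidRels m) r = 1 :=
  (QuotientGroup.eq_one_iff r).mpr (Subgroup.subset_normalClosure h)

lemma sig_comm (n a b : ℕ) (ha : 1 ≤ a) (hab : a + 2 ≤ b) (hb : b ≤ n - 1) :
    bσ n a * bσ n b = bσ n b * bσ n a := by
  have ha' : a - 1 < n - 1 := by omega
  have hb' : b - 1 < n - 1 := by omega
  have hmem : (FreeGroup.of (⟨a-1,ha'⟩ : Fin (n-1)) * FreeGroup.of ⟨b-1,hb'⟩ *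
      (FreeGroup.of ⟨a-1,ha'⟩)⁻¹ * (FreeGroup.of ⟨b-1,hb'⟩)⁻¹) ∈ braidRels (n-1) :=
    ⟨⟨a-1,ha'⟩, ⟨b-1,hb'⟩, Or.inl ⟨by simp; omega, rfl⟩⟩
  have h1 := mk_rel_one hmem
  rw [map_mul, map_mul, map_mul, map_inv, map_inv, mul_inv_eq_one,
    mul_inv_eq_iff_eq_mul] at h1
  rw [bσ, bσ, dif_pos ha', dif_pos hb']
  exact h1

lemma sig_braid (n a : ℕ) (ha : 1 ≤ a) (hb : a + 1 ≤ n - 1) :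
    bσ n a * bσ n (a+1) * bσ n a = bσ n (a+1) * bσ n a * bσ n (a+1) := by
  have ha' : a - 1 < n - 1 := by omega
  have hb' : a < n - 1 := by omega
  have hmem : (FreeGroup.of (⟨a-1,ha'⟩ : Fin (n-1)) * FreeGroup.of ⟨a,hb'⟩ *
      FreeGroup.of ⟨a-1,ha'⟩ *
      (FreeGroup.of ⟨a,hb'⟩ * FreeGroup.of ⟨a-1,ha'⟩ * FreeGroup.of ⟨a,hb'⟩)⁻¹)
      ∈ braidRels (n-1) :=
    ⟨⟨a-1,ha'⟩, ⟨a,hb'⟩, Or.inr ⟨by simp; omega, rfl⟩⟩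
  have h1 := mk_rel_one hmem
  rw [map_mul, map_mul, map_mul, map_inv, map_mul, map_mul, mul_inv_eq_one] at h1
  have h2 : (a+1) - 1 = a := rfl
  rw [bσ, bσ, h2, dif_pos ha', dif_pos hb']
  exact h1

/-- `σ_m σ_{m-1} ⋯ σ₁`. -/
def Dprod (n m : ℕ) : BraidGroup n := ((List.range m).map (fun k => bσ n (m-k))).prod

lemma Dprod_zero (n : ℕ) : Dprod n 0 = 1 := rfl

lemma Dprod_succ (n m : ℕ) : Dprod n (m+1) = bσ n (m+1) * Dprod n m := by
  simp [Dprod, List.range_succ_eq_map, List.map_map, Function.comp_def, Nat.succ_sub_succ]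

lemma bδ_eq (n : ℕ) : bδ n = Dprod n (n-1) := rfl

lemma comm_Dprod (n : ℕ) : ∀ j i, j + 2 ≤ i → i ≤ n - 1 →
    bσ n i * Dprod n j = Dprod n j * bσ n i := by
  intro j
  induction j with
  | zero => intro i _ _; simp [Dprod_zero]
  | succ j ih =>
    intro i hji hi
    rw [Dprod_succ, ← mul_assoc,
      show bσ n i * bσ n (j+1) = bσ n (j+1) * bσ n i from
        (sig_comm n (j+1) i (by omega) (by omega) hi).symm,
      mul_assoc, ih i (by omega) hi, mul_assoc]

lemma shift (n : ℕ) : ∀ m i, 1 ≤ i → i + 1 ≤ m → m ≤ n - 1 →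
    bσ n i * Dprod n m = Dprod n m * bσ n (i+1) := by
  intro m
  induction m with
  | zero => intro i _ _ _; omega
  | succ m ih =>
    intro i hi him hm
    rcases Nat.lt_or_ge (i+1) (m+1) with hlt | hge
    · rw [Dprod_succ, ← mul_assoc,
        sig_comm n i (m+1) hi (by omega) hm,
        mul_assoc, ih i hi (by omega) (by omega), mul_assoc]
    · -- i = m
      have hieq : i = m := by omega
      subst hieq
      obtain ⟨k, rfl⟩ : ∃ k, i = k + 1 := ⟨i - 1, by omega⟩
      rw [Dprod_succ, Dprod_succ]
      have hbr := sig_braid n (k+1) (by omega) (by omega)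
      have hcm := comm_Dprod n k (k+2) (by omega) (by omega)
      calc bσ n (k+1) * (bσ n (k+2) * (bσ n (k+1) * Dprod n k))
          = (bσ n (k+1) * bσ n (k+2) * bσ n (k+1)) * Dprod n k := by group
        _ = (bσ n (k+2) * bσ n (k+1) * bσ n (k+2)) * Dprod n k := by rw [hbr]
        _ = bσ n (k+2) * bσ n (k+1) * (bσ n (k+2) * Dprod n k) := by group
        _ = bσ n (k+2) * bσ n (k+1) * (Dprod n k * bσ n (k+2)) := by rw [hcm]
        _ = bσ n (k+2) * (bσ n (k+1) * Dprod n k) * bσ n (k+1+1) := by group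

lemma shift_pow (n : ℕ) : ∀ d i, 1 ≤ i → i + d ≤ n - 1 →
    bσ n i * (bδ n)^d = (bδ n)^d * bσ n (i+d) := by
  intro d
  induction d with
  | zero => intro i _ _; simp
  | succ d ih =>
    intro i hi hd
    calc bσ n i * bδ n ^ (d+1)
        = (bσ n i * bδ n) * bδ n ^ d := by rw [pow_succ']; group
      _ = (bδ n * bσ n (i+1)) * bδ n ^ d := by
          rw [bδ_eq, shift n (n-1) i hi (by omega) le_rfl]
      _ = bδ n * (bσ n (i+1) * bδ n ^ d) := by group
      _ = bδ n * (bδ n ^ d * bσ n (i+1+d)) := by rw [ih (i+1) (by omega) (by omega)]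
      _ = bδ n ^ (d+1) * bσ n (i+(d+1)) := by
          rw [show i+1+d = i+(d+1) by omega, ← mul_assoc, ← pow_succ']

lemma chain_eq (n d : ℕ) : bchain n (d+1) 1 = Dprod n d := by
  unfold bchain Dprod
  have h0 : d + 1 - 1 = d := rfl
  rw [h0]
  congr 1
  apply List.map_congr_left
  intro t ht
  rw [List.mem_range] at ht
  have h1 : d + 1 - t - 1 = d - t := by omega
  rw [band, h1]
  simp

end EpsPowAux

open EpsPowAux in
/-- In `B_n`, `ε^d = δ^d · [d+1, d, …, 2, 1]` for every `1 ≤ d ≤ n-1`,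
where `[d+1,…,2,1]` = a_{d+1,d} a_{d,d-1} ⋯ a_{2,1}`. -/
theorem epsilon_pow_d (n d : ℕ) (hd : 1 ≤ d) (hdn : d ≤ n - 1) :
    bε n ^ d = bδ n ^ d * bchain n (d + 1) 1 := by
  rw [chain_eq]
  induction d, hd using Nat.le_induction with
  | base =>
    rw [pow_one, pow_one, bε, Dprod_succ, Dprod_zero, mul_one]
  | succ d hd ih =>
    have ih' := ih (by omega)
    have hs := shift_pow n d 1 le_rfl (by omega)
    calc bε n ^ (d+1) = bε n * bε n ^ d := pow_succ' _ _
      _ = (bδ n * bσ n 1) * (bδ n ^ d * Dprod n d) := by rw [ih', bε]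
      _ = bδ n * ((bσ n 1 * bδ n ^ d) * Dprod n d) := by group
      _ = bδ n * ((bδ n ^ d * bσ n (1+d)) * Dprod n d) := by rw [hs]
      _ = (bδ n * bδ n ^ d) * (bσ n (1+d) * Dprod n d) := by group
      _ = bδ n ^ (d+1) * Dprod n (d+1) := by
          rw [show 1+d = d+1 by omega, ← pow_succ', Dprod_succ]
end

section
/- Let k be an integer, n ≥ 2, d = gcd(k, n-1), and p, q integers with (n-1)p + kq = d. If α ∈ B_n satisfies α^{(n-1)/d} = δ^n (e.g., α is conjugate to ε^d), then δ^{np}(α^{k/d})^q = α; and if β ∈ B_n satisfies β^{(n-1)/d} = δ^{kn/d} (e.g., β is conjugate to ε^k), then (δ^{np} β^q)^{k/d} = β. In particular, the maps f(α) = α^{k/d} and g(β) = δ^{np}β^q are mutually inverse bijections between the conjugacy class of ε^d and the conjugacy class of ε^k. -/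
/-!
Conjugation by `δ` shifts the generators down, `δ σᵢ₊₁ = σᵢ δ`, and the relation
`σ_m (σ_m ⋯ σ₁)² = (σ_m ⋯ σ₁)² σ₁` closes the cycle, so `δⁿ = δ^{n-1-i} δ² δ^{i-1}` carries
`σᵢ` to `σ₁`, to `σ_{n-1}` and back to `σᵢ`: `δⁿ` is central. Pushing the `σ₁`'s of
`ε^m = (δσ₁)^m` to the right gives `ε^m = δ^m σ_m ⋯ σ₁`, whence `ε^{n-1} = δⁿ`.

The rest is group theory around the central element `z = δⁿ`, with `e = (n-1)/d`, `K = k/d`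
and `ep + Kq = 1`: if `α^e = z` then `z^p (α^K)^q = α^{ep+Kq} = α`; if `β^e = z^K` then
`(z^p β^q)^K = (β^e)^p β^{Kq} = β`. A conjugate of `ε^d` has `e`-th power conjugate to the
central element `ε^{n-1} = z`, hence equal to it.
-/

namespace BraidGroup

variable {n : ℕ}

theorem bσ_eq_of {i : ℕ} (h₁ : 1 ≤ i) (h₂ : i ≤ n - 1) :
    bσ n i = PresentedGroup.of (⟨i - 1, by omega⟩ : Fin (n - 1)) :=
  dif_pos _

theorem commute_bσ {i j : ℕ} (hi : 1 ≤ i) (hij : i + 2 ≤ j) (hj : j ≤ n - 1) :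
    Commute (bσ n i) (bσ n j) := by
  have h := PresentedGroup.one_of_mem (rels := braidRels (n - 1))
    ⟨⟨i - 1, by omega⟩, ⟨j - 1, by omega⟩, Or.inl ⟨by simp only; omega, rfl⟩⟩
  simp only [map_mul, map_inv, mul_inv_eq_iff_eq_mul] at h
  rw [bσ_eq_of hi (by omega), bσ_eq_of (by omega) hj]
  exact h

theorem bσ_braid {i : ℕ} (hi : 1 ≤ i) (hin : i + 1 ≤ n - 1) :
    bσ n i * bσ n (i + 1) * bσ n i = bσ n (i + 1) * bσ n i * bσ n (i + 1) := by
  have h := PresentedGroup.one_of_mem (rels := braidRels (n - 1))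
    ⟨⟨i - 1, by omega⟩, ⟨i, by omega⟩, Or.inr ⟨by simp only; omega, rfl⟩⟩
  simp only [map_mul, map_inv, mul_inv_eq_one] at h
  rw [bσ_eq_of hi (by omega), bσ_eq_of (by omega) hin]
  exact h

theorem semiconjBy_bσ_mul_bσ {i : ℕ} (hi : 1 ≤ i) (hin : i + 1 ≤ n - 1) :
    SemiconjBy (bσ n i * bσ n (i + 1)) (bσ n i) (bσ n (i + 1)) := by
  rw [SemiconjBy, bσ_braid hi hin, mul_assoc]

theorem semiconjBy_bσ_succ_mul_bσ {i : ℕ} (hi : 1 ≤ i) (hin : i + 1 ≤ n - 1) :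
    SemiconjBy (bσ n (i + 1) * bσ n i) (bσ n (i + 1)) (bσ n i) := by
  rw [SemiconjBy, ← bσ_braid hi hin, mul_assoc]

/-- `σ_j ⋯ σ₂ σ₁`. -/
def bδTail (n j : ℕ) : BraidGroup n := ((List.range j).map fun k => bσ n (j - k)).prod

theorem bδTail_zero : bδTail n 0 = 1 := rfl

theorem bδTail_succ (j : ℕ) : bδTail n (j + 1) = bσ n (j + 1) * bδTail n j := by
  simp only [bδTail, List.range_succ_eq_map, List.map_cons, List.map_map, List.prod_cons,
    Nat.sub_zero]
  congr 2
  exact List.map_congr_left fun k _ => by simp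

theorem commute_bδTail_bσ {j m : ℕ} (hjm : j + 2 ≤ m) (hm : m ≤ n - 1) :
    Commute (bδTail n j) (bσ n m) := by
  induction j with
  | zero => exact Commute.one_left _
  | succ j ih =>
    rw [bδTail_succ]
    exact (commute_bσ (by omega) hjm hm).mul_left (ih (by omega))

theorem semiconjBy_bδTail_bσ {i j : ℕ} (hi : 1 ≤ i) (hij : i + 1 ≤ j) (hj : j ≤ n - 1) :
    SemiconjBy (bδTail n j) (bσ n (i + 1)) (bσ n i) := by
  induction j, hij using Nat.le_induction with
  | base =>
    obtain ⟨i, rfl⟩ : ∃ i', i = i' + 1 := ⟨i - 1, by omega⟩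
    rw [bδTail_succ, bδTail_succ, ← mul_assoc]
    exact (semiconjBy_bσ_succ_mul_bσ hi hj).mul_left (commute_bδTail_bσ (by omega) hj)
  | succ j hij ih =>
    rw [bδTail_succ]
    exact SemiconjBy.mul_left (commute_bσ hi (by omega) hj).symm (ih (by omega))

theorem semiconjBy_bδTail_mul_bδTail {j : ℕ} (hj : j + 1 ≤ n - 1) :
    SemiconjBy (bδTail n j * bδTail n (j + 1)) (bσ n 1) (bσ n (j + 1)) := by
  induction j with
  | zero =>
    rw [bδTail_succ, bδTail_zero, one_mul, mul_one]
    exact Commute.refl _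
  | succ j ih =>
    have h : bδTail n (j + 1) * bδTail n (j + 2) =
        bσ n (j + 1) * bσ n (j + 2) * (bδTail n j * bδTail n (j + 1)) := by
      rw [bδTail_succ (j + 1), bδTail_succ j, mul_assoc, mul_assoc, ← mul_assoc (bδTail n j),
        (commute_bδTail_bσ (le_refl _) hj).eq]
      simp only [mul_assoc]
    rw [h]
    exact (semiconjBy_bσ_mul_bσ (by omega) hj).mul_left (ih (by omega))

theorem semiconjBy_bδTail_sq {m : ℕ} (hm : 1 ≤ m) (hmn : m ≤ n - 1) :
    SemiconjBy (bδTail n m ^ 2) (bσ n 1) (bσ n m) := by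
  obtain ⟨j, rfl⟩ : ∃ j, m = j + 1 := ⟨m - 1, by omega⟩
  rw [sq]
  nth_rw 1 [bδTail_succ]
  rw [mul_assoc]
  exact SemiconjBy.mul_left (Commute.refl _) (semiconjBy_bδTail_mul_bδTail hmn)

theorem bδ_eq_bδTail : bδ n = bδTail n (n - 1) := rfl

theorem semiconjBy_bδ_pow_bσ {i j : ℕ} (hi : 1 ≤ i) (hij : i ≤ j) (hj : j ≤ n - 1) :
    SemiconjBy (bδ n ^ (j - i)) (bσ n j) (bσ n i) := by
  induction j, hij using Nat.le_induction with
  | base =>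
    rw [Nat.sub_self, pow_zero]
    exact SemiconjBy.one_left _
  | succ j hij ih =>
    rw [Nat.sub_add_comm hij, pow_succ]
    exact (ih (by omega)).mul_left (semiconjBy_bδTail_bσ (hi.trans hij) (by omega) le_rfl)

theorem bδ_pow_mem_center (hn : 2 ≤ n) : bδ n ^ n ∈ Subgroup.center (BraidGroup n) := by
  have hσ {i : ℕ} (hi : 1 ≤ i) (hin : i ≤ n - 1) : Commute (bδ n ^ n) (bσ n i) := by
    have hsplit : bδ n ^ n = bδ n ^ (n - 1 - i) * bδ n ^ 2 * bδ n ^ (i - 1) := by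
      rw [← pow_add, ← pow_add]
      congr 1
      omega
    rw [hsplit]
    exact ((semiconjBy_bδ_pow_bσ hi hin le_rfl).mul_left
      (semiconjBy_bδTail_sq (by omega) le_rfl)).mul_left (semiconjBy_bδ_pow_bσ le_rfl hi hin)
  refine Subgroup.mem_center_iff.2 fun g => Subgroup.mem_centralizer_singleton_iff.1 ?_
  refine PresentedGroup.generated_by _ _ (fun j => ?_) g
  have hj : PresentedGroup.of j = bσ n (j + 1) := (bσ_eq_of (by omega) j.isLt).symm
  rw [Subgroup.mem_centralizer_singleton_iff, hj]
  exact (hσ (by omega) j.isLt).symm.eq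

theorem bε_pow {m : ℕ} (hm : m ≤ n - 1) : bε n ^ m = bδ n ^ m * bδTail n m := by
  induction m with
  | zero => rw [pow_zero, pow_zero, bδTail_zero, one_mul]
  | succ m ih =>
    have h := semiconjBy_bδ_pow_bσ (n := n) le_rfl (by omega : 1 ≤ m + 1) hm
    rw [Nat.add_sub_cancel] at h
    rw [pow_succ', ih (by omega), bε, bδTail_succ, pow_succ', mul_assoc, mul_assoc,
      ← mul_assoc (bσ n 1), ← h.eq]
    simp only [mul_assoc]

theorem bε_zpow_sub_one (hn : 2 ≤ n) : bε n ^ ((n : ℤ) - 1) = bδ n ^ (n : ℤ) := by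
  rw [← Nat.cast_pred (by omega), zpow_natCast, zpow_natCast, bε_pow le_rfl, ← bδ_eq_bδTail,
    ← pow_succ, Nat.sub_add_cancel (by omega)]

end BraidGroup

section PowerCorrespondence

variable {G : Type*} [Group G] {a b x z : G} {d e K p q : ℤ}

theorem IsConj.zpow (h : IsConj a b) (m : ℤ) : IsConj (a ^ m) (b ^ m) := by
  obtain ⟨c, rfl⟩ := isConj_iff.1 h
  exact isConj_iff.2 ⟨c, conj_zpow.symm⟩

theorem IsConj.mul_left_of_mem_center (h : IsConj a b) (hz : z ∈ Subgroup.center G) :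
    IsConj (z * a) (z * b) := by
  obtain ⟨c, rfl⟩ := isConj_iff.1 h
  refine isConj_iff.2 ⟨c, ?_⟩
  rw [← mul_assoc c, Subgroup.mem_center_iff.1 hz c]
  simp only [mul_assoc]

theorem IsConj.zpow_eq_of_mem_center (h : IsConj a b) (ha : a ^ e = z)
    (hz : z ∈ Subgroup.center G) : b ^ e = z :=
  ((h.zpow e).eq_of_left_mem_center (ha ▸ hz)).symm.trans ha

theorem zpow_mul_zpow_zpow_eq_self (ha : a ^ e = z) (h : e * p + K * q = 1) :
    z ^ p * (a ^ K) ^ q = a := by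
  rw [← ha, ← zpow_mul, ← zpow_mul, ← zpow_add, h, zpow_one]

theorem zpow_mul_zpow_zpow_zpow_eq_self (hz : z ∈ Subgroup.center G) (hb : b ^ e = z ^ K)
    (h : e * p + K * q = 1) : (z ^ p * b ^ q) ^ K = b := by
  have hcomm : Commute (z ^ p) (b ^ q) :=
    (Subgroup.mem_center_iff.1 (Subgroup.zpow_mem _ hz p) (b ^ q)).symm
  rw [hcomm.mul_zpow, ← zpow_mul, ← zpow_mul, mul_comm p, zpow_mul, ← hb, ← zpow_mul,
    mul_comm q, ← zpow_add, h, zpow_one]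

theorem isConj_zpow_mul_zpow (hz : z ∈ Subgroup.center G) (hx : x ^ (d * e) = z)
    (h : e * p + K * q = 1) (hb : IsConj (x ^ (d * K)) b) : IsConj (x ^ d) (z ^ p * b ^ q) := by
  have hxd : x ^ d = z ^ p * (x ^ (d * K)) ^ q := by
    rw [← hx, ← zpow_mul, ← zpow_mul, ← zpow_add, mul_assoc, mul_assoc, ← mul_add, h, mul_one]
  rw [hxd]
  exact (hb.zpow q).mul_left_of_mem_center (Subgroup.zpow_mem _ hz p)

end PowerCorrespondence

open BraidGroup in
/-- Let `d = gcd(k, n-1)` and `(n-1)p + kq = d`. If `α^{(n-1)/d} = δ^n` (as holds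
for any conjugate of `ε^d`) then `δ^{np} (α^{k/d})^q = α`; if `β^{(n-1)/d} = δ^{kn/d}`
(as holds for any conjugate of `ε^k`) then `(δ^{np} β^q)^{k/d} = β`.  In particular
`f(α) = α^{k/d}` and `g(β) = δ^{np} β^q` are mutually inverse bijections between the
conjugacy classes of `ε^d` and of `ε^k`. -/
theorem stable_correspondence (n : ℕ) (hn : 2 ≤ n) (k d p q : ℤ)
    (hd : d = Int.gcd k ((n : ℤ) - 1)) (hpq : ((n : ℤ) - 1) * p + k * q = d) :
    (∀ α : BraidGroup n, α ^ (((n : ℤ) - 1) / d) = bδ n ^ (n : ℤ) →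
        bδ n ^ ((n : ℤ) * p) * (α ^ (k / d)) ^ q = α) ∧
    (∀ β : BraidGroup n, β ^ (((n : ℤ) - 1) / d) = bδ n ^ (k * (n : ℤ) / d) →
        (bδ n ^ ((n : ℤ) * p) * β ^ q) ^ (k / d) = β) ∧
    (∀ α : BraidGroup n, IsConj (bε n ^ d) α →
        IsConj (bε n ^ k) (α ^ (k / d)) ∧
          bδ n ^ ((n : ℤ) * p) * (α ^ (k / d)) ^ q = α) ∧
    (∀ β : BraidGroup n, IsConj (bε n ^ k) β →
        IsConj (bε n ^ d) (bδ n ^ ((n : ℤ) * p) * β ^ q) ∧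
          (bδ n ^ ((n : ℤ) * p) * β ^ q) ^ (k / d) = β) := by
  have hdn : d ∣ (n : ℤ) - 1 := hd ▸ Int.gcd_dvd_right k _
  have hd0 : d ≠ 0 := by
    rintro rfl
    rw [zero_dvd_iff] at hdn
    omega
  obtain ⟨e, he⟩ := hdn
  obtain ⟨K, rfl⟩ : d ∣ k := hd ▸ Int.gcd_dvd_left k _
  have hbez : e * p + K * q = 1 := by
    rw [he] at hpq
    exact mul_left_cancel₀ hd0 (by linear_combination hpq)
  have hz : bδ n ^ (n : ℤ) ∈ Subgroup.center (BraidGroup n) := by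
    rw [zpow_natCast]
    exact bδ_pow_mem_center hn
  have hε : bε n ^ (d * e) = bδ n ^ (n : ℤ) := by rw [← he, bε_zpow_sub_one hn]
  rw [he, Int.mul_ediv_cancel_left e hd0, Int.mul_ediv_cancel_left K hd0, mul_assoc d K,
    Int.mul_ediv_cancel_left _ hd0, mul_comm K, zpow_mul (bδ n) (n : ℤ) p,
    zpow_mul (bδ n) (n : ℤ) K]
  refine ⟨fun α hα => zpow_mul_zpow_zpow_eq_self hα hbez,
    fun β hβ => zpow_mul_zpow_zpow_zpow_eq_self hz hβ hbez,
    fun α hα => ⟨?_, ?_⟩, fun β hβ => ⟨isConj_zpow_mul_zpow hz hε hbez hβ, ?_⟩⟩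
  · rw [zpow_mul]
    exact hα.zpow K
  · exact zpow_mul_zpow_zpow_eq_self (hα.zpow_eq_of_mem_center (by rw [← zpow_mul, hε]) hz) hbez
  · refine zpow_mul_zpow_zpow_zpow_eq_self hz ?_ hbez
    exact hβ.zpow_eq_of_mem_center (by rw [← zpow_mul, mul_right_comm, zpow_mul, hε])
      (Subgroup.zpow_mem _ hz _)
end
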